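/- arXiv:1704.00667 — 3 statements merged into one kernel-verified Lean document; each statement's English description precedes it below -/
import Mathlib

section
/- Off-diagonal Gram–Schmidt smallness: in the setting above (v̂ⁱ = (eⁱ, wᵢ), |wᵢ| ≤ C₀, (vˡ) the Gram–Schmidt orthonormalization), for any i ≠ ℓ one has |⟨v̂ⁱ, vˡ⟩| ≤ √2 C₀. -/
open scoped RealInnerProductSpace

/-!
For `i < l`, `v̂ⁱ` lies in the span of the first `l` Gram–Schmidt vectors, so it is orthogonal
to `vˡ`. For `l < i`, `vˡ` lies in the span of `v̂⁰, …, v̂ˡ`, whose `i`-th coordinates all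
vanish; since `v̂ⁱ = (eⁱ, wᵢ)` only the lower block contributes to `⟨v̂ⁱ, vˡ⟩`, and
Cauchy–Schwarz bounds it by `|wᵢ| ‖vˡ‖ ≤ C₀`.
-/

open InnerProductSpace

namespace InnerProductSpace

variable {𝕜 E F ι : Type*} [RCLike 𝕜] [NormedAddCommGroup E] [InnerProductSpace 𝕜 E]
  [LinearOrder ι] [LocallyFiniteOrderBot ι] [WellFoundedLT ι]

theorem inner_gramSchmidtNormed_eq_zero_of_lt (v : ι → E) {i l : ι} (hil : i < l) :
    inner 𝕜 (v i) (gramSchmidtNormed 𝕜 v l) = 0 := by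
  rw [gramSchmidtNormed, inner_smul_right, inner_eq_zero_symm.mp
    (gramSchmidt_inv_triangular 𝕜 v hil), mul_zero]

theorem norm_gramSchmidtNormed_le_one (v : ι → E) (l : ι) : ‖gramSchmidtNormed 𝕜 v l‖ ≤ 1 := by
  rcases eq_or_ne (gramSchmidtNormed 𝕜 v l) 0 with h | h
  · simp [h]
  · exact (gramSchmidtNormed_unit_length' h).le

theorem map_gramSchmidtNormed_eq_zero [AddCommGroup F] [Module 𝕜 F] (φ : E →ₗ[𝕜] F)
    (v : ι → E) {l : ι} (hφ : ∀ j ≤ l, φ (v j) = 0) : φ (gramSchmidtNormed 𝕜 v l) = 0 := by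
  have hspan : Submodule.span 𝕜 (v '' Set.Iic l) ≤ LinearMap.ker φ :=
    Submodule.span_le.mpr (Set.image_subset_iff.mpr hφ)
  exact hspan (Submodule.smul_mem _ _ (gramSchmidt_mem_span 𝕜 v le_rfl))

end InnerProductSpace

namespace EuclideanSpace

variable {𝕜 : Type*} [RCLike 𝕜] {d m : ℕ}

noncomputable def lowerBlock (x : EuclideanSpace 𝕜 (Fin (d + m))) : EuclideanSpace 𝕜 (Fin m) :=
  WithLp.toLp 2 fun j => x (Fin.natAdd d j)

theorem inner_eq_sum_castAdd_add_inner_lowerBlock (x y : EuclideanSpace 𝕜 (Fin (d + m))) :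
    inner 𝕜 x y = ∑ j : Fin d, inner 𝕜 (x (Fin.castAdd m j)) (y (Fin.castAdd m j)) +
      inner 𝕜 (lowerBlock x) (lowerBlock y) := by
  simp only [PiLp.inner_apply, Fin.sum_univ_add, lowerBlock]

theorem norm_lowerBlock (x : EuclideanSpace 𝕜 (Fin (d + m))) :
    ‖lowerBlock x‖ = √(∑ j : Fin m, ‖x (Fin.natAdd d j)‖ ^ 2) :=
  EuclideanSpace.norm_eq _

theorem norm_lowerBlock_le (x : EuclideanSpace 𝕜 (Fin (d + m))) : ‖lowerBlock x‖ ≤ ‖x‖ := by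
  rw [norm_lowerBlock, EuclideanSpace.norm_eq, Fin.sum_univ_add]
  gcongr
  exact le_add_of_nonneg_left (Finset.sum_nonneg fun _ _ => sq_nonneg _)

end EuclideanSpace

open EuclideanSpace

theorem stmt_7_general (d m : ℕ) (C₀ : ℝ)
    [WellFoundedLT (Fin d)]
    (v : Fin d → EuclideanSpace ℝ (Fin (d + m)))
    (hfst : ∀ i j : Fin d, v i (Fin.castAdd m j) = if i = j then 1 else 0)
    (hsnd : ∀ i : Fin d,
      Real.sqrt (∑ j : Fin m, (v i (Fin.natAdd d j)) ^ 2) ≤ C₀) :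
    ∀ i l : Fin d, i ≠ l →
      |⟪v i, InnerProductSpace.gramSchmidtNormed ℝ v l⟫| ≤ Real.sqrt 2 * C₀ := by
  intro i l hil
  have hC₀ : 0 ≤ C₀ := (Real.sqrt_nonneg _).trans (hsnd i)
  rcases hil.lt_or_gt with hil | hli
  · rw [inner_gramSchmidtNormed_eq_zero_of_lt v hil, abs_zero]
    positivity
  set u := gramSchmidtNormed ℝ v l
  have hu : u (Fin.castAdd m i) = 0 :=
    map_gramSchmidtNormed_eq_zero (EuclideanSpace.proj (𝕜 := ℝ) (Fin.castAdd m i)).toLinearMap v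
      fun j hj => by simp [hfst, (hj.trans_lt hli).ne]
  have hhead : ∑ j : Fin d, ⟪v i (Fin.castAdd m j), u (Fin.castAdd m j)⟫ = 0 := by
    simp [hfst, hu]
  have hwᵢ : ‖lowerBlock (v i)‖ ≤ C₀ := by
    simpa only [norm_lowerBlock, Real.norm_eq_abs, sq_abs] using hsnd i
  calc |⟪v i, u⟫| = |⟪lowerBlock (v i), lowerBlock u⟫| := by
        rw [inner_eq_sum_castAdd_add_inner_lowerBlock, hhead, zero_add]
    _ ≤ ‖lowerBlock (v i)‖ * ‖lowerBlock u‖ := abs_real_inner_le_norm _ _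
    _ ≤ C₀ * 1 := by
        gcongr
        exact (norm_lowerBlock_le u).trans (norm_gramSchmidtNormed_le_one v l)
    _ ≤ √2 * C₀ := by nlinarith [Real.one_lt_sqrt_two]

/-- Off-diagonal Gram–Schmidt smallness: with `v̂ⁱ = (eⁱ, wᵢ)`, `|wᵢ| ≤ C₀ ≤ 1`, and
`vˡ` the Gram–Schmidt orthonormalization, `|⟨v̂ⁱ, vˡ⟩| ≤ √2 C₀` for `i ≠ l`. -/
theorem stmt_7 (d m : ℕ) (C₀ : ℝ) (hC₀ : 0 ≤ C₀) (hC₀1 : C₀ ≤ 1)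
    [WellFoundedLT (Fin d)]
    (v : Fin d → EuclideanSpace ℝ (Fin (d + m)))
    (hfst : ∀ i j : Fin d, v i (Fin.castAdd m j) = if i = j then 1 else 0)
    (hsnd : ∀ i : Fin d,
      Real.sqrt (∑ j : Fin m, (v i (Fin.natAdd d j)) ^ 2) ≤ C₀) :
    ∀ i l : Fin d, i ≠ l →
      |⟪v i, InnerProductSpace.gramSchmidtNormed ℝ v l⟫| ≤ Real.sqrt 2 * C₀ :=
  stmt_7_general d m C₀ v hfst hsnd
end

section
/- Angle estimate via Gram–Schmidt: let w ∈ ℝᵈ×ℝ^{n−d} be obtained by Gram–Schmidt orthonormalization from vectors of the form ŵʲ = (−gⱼ, eʲ) with |gⱼ| ≤ C₀, j = d+1,…,n. Then each resulting unit vector wʲ satisfies ⟨wʲ, eʲ⟩ ≥ (1+C₀²)^{−1/2}, and consequently |wʲ − eʲ|² ≤ 2(1 − (1+C₀²)^{−1/2}) ≤ C₀². -/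
/-!
Write `g = w̃ʲ` for the `j`-th Gram–Schmidt vector. Since `ŵʲ − g` lies in the span of the earlier
`ŵˡ`, and these all have vanishing `eʲ`-coordinate, `⟨g, eʲ⟩ = ⟨ŵʲ, eʲ⟩ = 1`. Moreover `g` is the
orthogonal projection of `ŵʲ` onto the complement of that span, so `|g| ≤ |ŵʲ| ≤ (1 + C₀²)^{1/2}`.
Hence `⟨wʲ, eʲ⟩ = 1/|g| ≥ (1 + C₀²)^{−1/2}`, and for the unit vectors `wʲ, eʲ` we get
`|wʲ − eʲ|² = 2(1 − ⟨wʲ, eʲ⟩)`. The last bound is the elementary `2(1 − 1/s) ≤ s² − 1` for `s ≥ 1`.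
-/

open Finset Submodule InnerProductSpace

namespace InnerProductSpace

variable {𝕜 E ι : Type*} [RCLike 𝕜] [NormedAddCommGroup E] [InnerProductSpace 𝕜 E]
  [LinearOrder ι] [LocallyFiniteOrderBot ι] [WellFoundedLT ι]

theorem map_gramSchmidt_of_map_eq_zero {F : Type*} [AddCommGroup F] [Module 𝕜 F]
    (φ : E →ₗ[𝕜] F) (f : ι → E) {j : ι} (hφ : ∀ i < j, φ (f i) = 0) :
    φ (gramSchmidt 𝕜 f j) = φ (f j) := by
  have hker : span 𝕜 (f '' Set.Iio j) ≤ LinearMap.ker φ := by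
    rw [span_le]
    rintro _ ⟨i, hi, rfl⟩
    exact hφ i hi
  have hmem : ∑ i ∈ Iio j, (𝕜 ∙ gramSchmidt 𝕜 f i).starProjection (f j) ∈
      span 𝕜 (f '' Set.Iio j) := by
    rw [← span_gramSchmidt_Iio]
    refine sum_mem fun i hi => ?_
    rw [starProjection_singleton]
    exact smul_mem _ _ (subset_span ⟨i, mem_Iio.1 hi, rfl⟩)
  conv_rhs => rw [gramSchmidt_def' 𝕜 f j]
  rw [map_add, hker hmem, add_zero]

theorem norm_gramSchmidt_le (f : ι → E) (j : ι) : ‖gramSchmidt 𝕜 f j‖ ≤ ‖f j‖ := by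
  set r := ∑ i ∈ Iio j,
    (⟪gramSchmidt 𝕜 f i, f j⟫_𝕜 / (‖gramSchmidt 𝕜 f i‖ : 𝕜) ^ 2) • gramSchmidt 𝕜 f i
  have horth : ⟪gramSchmidt 𝕜 f j, r⟫_𝕜 = 0 := by
    rw [inner_sum]
    refine sum_eq_zero fun i hi => ?_
    rw [inner_smul_right, gramSchmidt_orthogonal 𝕜 f (mem_Iio.1 hi).ne', mul_zero]
  have hpyth := norm_add_sq_eq_norm_sq_add_norm_sq_of_inner_eq_zero _ _ horth
  rw [← gramSchmidt_def''] at hpyth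
  exact (mul_self_le_mul_self_iff (norm_nonneg _) (norm_nonneg _)).2
    (hpyth ▸ le_add_of_nonneg_right (mul_self_nonneg _))

theorem inv_norm_le_map_gramSchmidtNormed {E : Type*} [NormedAddCommGroup E]
    [InnerProductSpace ℝ E] (φ : E →ₗ[ℝ] ℝ) (f : ι → E) {j : ι} (hφ : ∀ i < j, φ (f i) = 0)
    (hj : φ (f j) = 1) : ‖f j‖⁻¹ ≤ φ (gramSchmidtNormed ℝ f j) := by
  have hg : φ (gramSchmidt ℝ f j) = 1 := (map_gramSchmidt_of_map_eq_zero φ f hφ).trans hj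
  have hg_pos : 0 < ‖gramSchmidt ℝ f j‖ := norm_pos_iff.2 fun h => by simp [h] at hg
  rw [gramSchmidtNormed, map_smul, hg, RCLike.ofReal_real_eq_id, id, smul_eq_mul, mul_one]
  exact inv_anti₀ hg_pos (norm_gramSchmidt_le f j)

end InnerProductSpace

namespace EuclideanSpace

theorem norm_sub_single_one_sq {ι : Type*} [Fintype ι] [DecidableEq ι]
    {u : EuclideanSpace ℝ ι} (hu : ‖u‖ = 1) (i : ι) :
    ‖u - single i (1 : ℝ)‖ ^ 2 = 2 * (1 - u i) := by
  rw [norm_sub_sq_real, inner_single_right, hu, PiLp.norm_single]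
  simp only [conj_trivial, one_mul, norm_one]
  ring

theorem real_norm_sq_eq_sum_castAdd_add_sum_natAdd {d m : ℕ}
    (x : EuclideanSpace ℝ (Fin (d + m))) :
    ‖x‖ ^ 2 = ∑ i : Fin d, x (Fin.castAdd m i) ^ 2 + ∑ k : Fin m, x (Fin.natAdd d k) ^ 2 := by
  rw [real_norm_sq_eq, Fin.sum_univ_add]

end EuclideanSpace

theorem two_mul_one_sub_inv_sqrt_one_add_sq_le (c : ℝ) :
    2 * (1 - (√(1 + c ^ 2))⁻¹) ≤ c ^ 2 := by
  set s := √(1 + c ^ 2)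
  have hs_sq : s ^ 2 = 1 + c ^ 2 := Real.sq_sqrt (by positivity)
  have hs : 1 ≤ s := Real.one_le_sqrt.2 (by nlinarith)
  have key : 2 * (1 - s⁻¹) = 2 * (s - 1) / s := by field_simp
  rw [key, div_le_iff₀ (by positivity)]
  -- `s * (s ^ 2 - 1) - 2 * (s - 1) = (s - 1) ^ 2 * (s + 2)`
  nlinarith [mul_nonneg (sq_nonneg (s - 1)) (by linarith : 0 ≤ s + 2)]

theorem stmt_11_general (d m : ℕ) (C₀ : ℝ)
    (w : Fin m → EuclideanSpace ℝ (Fin (d + m)))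
    (hsnd : ∀ j k : Fin m, w j (Fin.natAdd d k) = if j = k then 1 else 0)
    (hfst : ∀ j : Fin m,
      Real.sqrt (∑ i : Fin d, (w j (Fin.castAdd m i)) ^ 2) ≤ C₀) :
    ∀ j : Fin m,
      (1 + C₀ ^ 2) ^ (-(1 / 2) : ℝ) ≤ InnerProductSpace.gramSchmidtNormed ℝ w j (Fin.natAdd d j) ∧
      ‖InnerProductSpace.gramSchmidtNormed ℝ w j - EuclideanSpace.single (Fin.natAdd d j) (1 : ℝ)‖ ^ 2
        ≤ 2 * (1 - (1 + C₀ ^ 2) ^ (-(1 / 2) : ℝ)) ∧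
      ‖InnerProductSpace.gramSchmidtNormed ℝ w j - EuclideanSpace.single (Fin.natAdd d j) (1 : ℝ)‖ ^ 2
        ≤ C₀ ^ 2 := by
  intro j
  have hrpow : (1 + C₀ ^ 2) ^ (-(1 / 2) : ℝ) = (√(1 + C₀ ^ 2))⁻¹ := by
    rw [Real.sqrt_eq_rpow, ← Real.rpow_neg (by positivity)]
  have hwj : ‖w j‖ ≤ √(1 + C₀ ^ 2) := by
    have hlast : ∑ k : Fin m, w j (Fin.natAdd d k) ^ 2 = 1 := by simp [hsnd]
    rw [Real.le_sqrt (norm_nonneg _) (by positivity),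
      EuclideanSpace.real_norm_sq_eq_sum_castAdd_add_sum_natAdd, hlast, add_comm]
    exact add_le_add_right (Real.sqrt_le_iff.1 (hfst j)).2 1
  have hwj_pos : 0 < ‖w j‖ := norm_pos_iff.2 fun h => by simpa [h] using hsnd j j
  have hcoord : (√(1 + C₀ ^ 2))⁻¹ ≤ gramSchmidtNormed ℝ w j (Fin.natAdd d j) :=
    (inv_anti₀ hwj_pos hwj).trans <| inv_norm_le_map_gramSchmidtNormed
      (EuclideanSpace.projₗ (Fin.natAdd d j)) w
      (fun i hi => by simp [hsnd, hi.ne]) (by simp [hsnd])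
  have hunit : ‖gramSchmidtNormed ℝ w j‖ = 1 := gramSchmidtNormed_unit_length' fun h => by
    rw [h, PiLp.zero_apply] at hcoord
    exact hcoord.not_gt (by positivity)
  rw [hrpow, EuclideanSpace.norm_sub_single_one_sq hunit]
  refine ⟨hcoord, by linarith, ?_⟩
  linarith [two_mul_one_sub_inv_sqrt_one_add_sq_le C₀]

/-- Angle estimate via Gram–Schmidt: from vectors `ŵʲ = (−gⱼ, eʲ)` with `|gⱼ| ≤ C₀`, the
Gram–Schmidt orthonormalization `wʲ` satisfies `⟨wʲ, eʲ⟩ ≥ (1+C₀²)^{−1/2}` and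
`|wʲ − eʲ|² ≤ 2(1 − (1+C₀²)^{−1/2}) ≤ C₀²`. -/
theorem stmt_11 (d m : ℕ) (C₀ : ℝ) (hC₀ : 0 ≤ C₀) [WellFoundedLT (Fin m)]
    (w : Fin m → EuclideanSpace ℝ (Fin (d + m)))
    (hsnd : ∀ j k : Fin m, w j (Fin.natAdd d k) = if j = k then 1 else 0)
    (hfst : ∀ j : Fin m,
      Real.sqrt (∑ i : Fin d, (w j (Fin.castAdd m i)) ^ 2) ≤ C₀) :
    ∀ j : Fin m,
      (1 + C₀ ^ 2) ^ (-(1 / 2) : ℝ) ≤ InnerProductSpace.gramSchmidtNormed ℝ w j (Fin.natAdd d j) ∧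
      ‖InnerProductSpace.gramSchmidtNormed ℝ w j - EuclideanSpace.single (Fin.natAdd d j) (1 : ℝ)‖ ^ 2
        ≤ 2 * (1 - (1 + C₀ ^ 2) ^ (-(1 / 2) : ℝ)) ∧
      ‖InnerProductSpace.gramSchmidtNormed ℝ w j - EuclideanSpace.single (Fin.natAdd d j) (1 : ℝ)‖ ^ 2
        ≤ C₀ ^ 2 :=
  stmt_11_general d m C₀ w hsnd hfst
end

section
/- Degree rigidity for proper local diffeomorphisms: let U, V ⊂ ℝⁿ be open and connected, and let ρ : U → V be a C¹ proper map whose differential is invertible at every point. Define N(z) ∈ {0,1,2} according to whether ρ⁻¹(z) is empty, a single point, or contains at least two points. Then N is constant on V; in particular, if ρ is injective somewhere on an open subset in the sense that some value is attained exactly once, then ρ is a bijection from U onto V (and hence a diffeomorphism). -/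
/-!
By the inverse function theorem `ρ` is a local homeomorphism on `U`. Properness then makes both
the image `ρ '' U` and the set of values with exactly one preimage relatively clopen in `V`.
The image is open, and near `z ∈ V` it coincides with the image of the compact set `U ∩ ρ⁻¹ K`,
`K` a compact neighbourhood of `z`, which is closed. Two distinct preimages persist under
perturbation by the local homeomorphism property; a unique preimage `x` of `z` stays unique,
because the values near `z` with a preimage outside a chart around `x` lie in the image of a
compact set, a closed set not containing `z`. Connectedness of `V` then makes `N` constant.
-/

open Set Filter Topology

theorem ContDiffOn.isLocalHomeomorphOn {𝕂 : Type*} [RCLike 𝕂] {E F : Type*}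
    [NormedAddCommGroup E] [NormedSpace 𝕂 E] [CompleteSpace E]
    [NormedAddCommGroup F] [NormedSpace 𝕂 F] {f : E → F} {s : Set E} {n : WithTop ℕ∞}
    (hs : IsOpen s) (hf : ContDiffOn 𝕂 n f s) (hn : n ≠ 0)
    (hf' : ∀ x ∈ s, ∃ f' : E ≃L[𝕂] F, HasFDerivAt f (f' : E →L[𝕂] F) x) :
    IsLocalHomeomorphOn f s := fun x hx ↦
  let ⟨_, hf'x⟩ := hf' x hx
  let hfx := hf.contDiffAt (hs.mem_nhds hx)
  ⟨hfx.toOpenPartialHomeomorph f hf'x hn, hfx.mem_toOpenPartialHomeomorph_source hf'x hn, rfl⟩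

section ProperLocalHomeomorph

variable {X Y : Type*} [TopologicalSpace X] [TopologicalSpace Y] {f : X → Y} {U : Set X}
  {V : Set Y}

def IsProperOn (f : X → Y) (U : Set X) (V : Set Y) : Prop :=
  ∀ K ⊆ V, IsCompact K → IsCompact {x | x ∈ U ∧ f x ∈ K}

theorem IsLocalHomeomorphOn.image_mem_nhds (hf : IsLocalHomeomorphOn f U) {x : X} (hx : x ∈ U)
    {t : Set X} (ht : t ∈ 𝓝 x) : f '' t ∈ 𝓝 (f x) :=
  hf.map_nhds_eq hx ▸ image_mem_map ht

theorem IsLocalHomeomorphOn.isOpen_image (hf : IsLocalHomeomorphOn f U) (hU : IsOpen U) :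
    IsOpen (f '' U) :=
  isOpen_iff_mem_nhds.2 <| forall_mem_image.2 fun _ hx ↦ hf.image_mem_nhds hx (hU.mem_nhds hx)

theorem IsLocalHomeomorphOn.eventually_not_existsUnique_preimage [T2Space X]
    (hf : IsLocalHomeomorphOn f U) (hU : IsOpen U) {x₁ x₂ : X} (h₁ : x₁ ∈ U) (h₂ : x₂ ∈ U)
    (hne : x₁ ≠ x₂) (heq : f x₁ = f x₂) : ∀ᶠ z in 𝓝 (f x₁), ¬∃! x, x ∈ U ∧ f x = z := by
  obtain ⟨t₁, t₂, ht₁, ht₂, hx₁, hx₂, hdisj⟩ := t2_separation hne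
  filter_upwards [hf.image_mem_nhds h₁ (inter_mem (ht₁.mem_nhds hx₁) (hU.mem_nhds h₁)),
    heq ▸ hf.image_mem_nhds h₂ (inter_mem (ht₂.mem_nhds hx₂) (hU.mem_nhds h₂))]
    with _ ⟨y₁, ⟨hy₁, hy₁U⟩, hy₁z⟩ ⟨y₂, ⟨hy₂, hy₂U⟩, hy₂z⟩ huniq
  exact hdisj.ne_of_mem hy₁ hy₂ (huniq.unique ⟨hy₁U, hy₁z⟩ ⟨hy₂U, hy₂z⟩)

variable [T2Space Y] [LocallyCompactSpace Y]

theorem IsProperOn.closure_image_inter_subset (hproper : IsProperOn f U V) (hf : ContinuousOn f U)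
    (hV : IsOpen V) : closure (f '' U) ∩ V ⊆ f '' U := by
  rintro z ⟨hz, hzV⟩
  obtain ⟨K, hK, hKV, hKc⟩ := local_compact_nhds (hV.mem_nhds hzV)
  have hC : IsClosed (f '' {x | x ∈ U ∧ f x ∈ K}) :=
    ((hproper K hKV hKc).image_of_continuousOn (hf.mono fun _ hx ↦ hx.1)).isClosed
  suffices z ∈ f '' {x | x ∈ U ∧ f x ∈ K} from image_mono (fun _ hx ↦ hx.1) this
  by_contra hzC
  obtain ⟨_, ⟨hxC, hxK⟩, x, hx, rfl⟩ :=
    mem_closure_iff_nhds.1 hz _ (inter_mem (hC.isOpen_compl.mem_nhds hzC) hK)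
  exact hxC ⟨x, ⟨hx, hxK⟩, rfl⟩

theorem IsProperOn.subset_image (hproper : IsProperOn f U V) (hf : IsLocalHomeomorphOn f U)
    (hU : IsOpen U) (hV : IsOpen V) (hVc : IsPreconnected V) (hne : (V ∩ f '' U).Nonempty) :
    V ⊆ f '' U :=
  hVc.subset_of_closure_inter_subset (hf.isOpen_image hU) hne
    (hproper.closure_image_inter_subset hf.continuousOn hV)

theorem IsProperOn.eventually_existsUnique_preimage (hproper : IsProperOn f U V)
    (hf : IsLocalHomeomorphOn f U) (hU : IsOpen U) (hV : IsOpen V) {z : Y} (hz : z ∈ V)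
    (huniq : ∃! x, x ∈ U ∧ f x = z) : ∀ᶠ z' in 𝓝 z, ∃! x, x ∈ U ∧ f x = z' := by
  obtain ⟨x, ⟨hxU, rfl⟩, huniq⟩ := huniq
  obtain ⟨e, hxe, rfl⟩ := hf x hxU
  obtain ⟨K, hK, hKV, hKc⟩ := local_compact_nhds (hV.mem_nhds hz)
  have hD : IsCompact (e '' ({y | y ∈ U ∧ e y ∈ K} \ e.source)) :=
    ((hproper K hKV hKc).diff e.open_source).image_of_continuousOn
      (hf.continuousOn.mono fun _ hy ↦ hy.1.1)
  have hxD : e x ∉ e '' ({y | y ∈ U ∧ e y ∈ K} \ e.source) := by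
    rintro ⟨y, ⟨⟨hyU, -⟩, hye⟩, hyx⟩
    exact hye (huniq y ⟨hyU, hyx⟩ ▸ hxe)
  filter_upwards [hK, hD.isClosed.isOpen_compl.mem_nhds hxD,
    hf.image_mem_nhds hxU (inter_mem (e.open_source.mem_nhds hxe) (hU.mem_nhds hxU))]
    with _ hz'K hz'D ⟨y, ⟨hye, hyU⟩, hyz⟩
  subst hyz
  refine ⟨y, ⟨hyU, rfl⟩, fun y' ⟨hy'U, hy'⟩ ↦ e.injOn ?_ hye hy'⟩
  by_contra hy'e
  exact hz'D ⟨y', ⟨⟨hy'U, hy' ▸ hz'K⟩, hy'e⟩, hy'⟩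

theorem IsProperOn.existsUnique_preimage [T2Space X] (hproper : IsProperOn f U V)
    (hf : IsLocalHomeomorphOn f U) (hmaps : MapsTo f U V) (hU : IsOpen U) (hV : IsOpen V)
    (hVc : IsPreconnected V) {z₀ : Y} (hz₀ : z₀ ∈ V) (h₀ : ∃! x, x ∈ U ∧ f x = z₀) :
    ∀ z ∈ V, ∃! x, x ∈ U ∧ f x = z := by
  set W := {z | ∃! x, x ∈ U ∧ f x = z}
  have hWU : W ⊆ f '' U := fun _ hz ↦ hz.exists
  have hWo : IsOpen W := isOpen_iff_mem_nhds.2 fun z hz ↦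
    hproper.eventually_existsUnique_preimage hf hU hV (image_subset_iff.2 hmaps (hWU hz)) hz
  refine hVc.subset_of_closure_inter_subset hWo ⟨z₀, hz₀, h₀⟩ fun z ⟨hz, hzV⟩ ↦ ?_
  obtain ⟨x₁, hx₁U, rfl⟩ :=
    hproper.closure_image_inter_subset hf.continuousOn hV ⟨closure_mono hWU hz, hzV⟩
  refine ⟨x₁, ⟨hx₁U, rfl⟩, fun x₂ ⟨hx₂U, hx₂⟩ ↦ ?_⟩
  by_contra hne
  obtain ⟨_, hW', hW''⟩ := mem_closure_iff_nhds.1 hz _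
    (hf.eventually_not_existsUnique_preimage hU hx₁U hx₂U (Ne.symm hne) hx₂.symm)
  exact hW' hW''

end ProperLocalHomeomorph

theorem stmt_14_general (n : ℕ)
    (U V : Set (EuclideanSpace ℝ (Fin n)))
    (hU : IsOpen U) (hV : IsOpen V) (hVc : IsConnected V)
    (ρ : EuclideanSpace ℝ (Fin n) → EuclideanSpace ℝ (Fin n))
    (hmaps : Set.MapsTo ρ U V)
    (hC1 : ContDiffOn ℝ 1 ρ U)
    (hdiff : ∀ y ∈ U, ∃ L : EuclideanSpace ℝ (Fin n) ≃L[ℝ] EuclideanSpace ℝ (Fin n),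
      HasFDerivAt ρ (L : EuclideanSpace ℝ (Fin n) →L[ℝ] EuclideanSpace ℝ (Fin n)) y)
    (hproper : ∀ K : Set (EuclideanSpace ℝ (Fin n)), K ⊆ V → IsCompact K →
      IsCompact {y | y ∈ U ∧ ρ y ∈ K}) :
    (∀ z₁ ∈ V, ∀ z₂ ∈ V,
      (({y | y ∈ U ∧ ρ y = z₁} = ∅) ↔ ({y | y ∈ U ∧ ρ y = z₂} = ∅)) ∧
      ((∃! y, y ∈ U ∧ ρ y = z₁) ↔ (∃! y, y ∈ U ∧ ρ y = z₂))) ∧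
    ((∃ z₀ ∈ V, ∃! y, y ∈ U ∧ ρ y = z₀) → Set.BijOn ρ U V) := by
  have hproper : IsProperOn ρ U V := hproper
  have hρ : IsLocalHomeomorphOn ρ U := hC1.isLocalHomeomorphOn hU one_ne_zero hdiff
  have hnonempty : ∀ z₁ ∈ V, ∀ z₂ ∈ V,
      {y | y ∈ U ∧ ρ y = z₁}.Nonempty → {y | y ∈ U ∧ ρ y = z₂}.Nonempty :=
    fun z₁ hz₁ _ hz₂ ⟨y, hy⟩ ↦
      hproper.subset_image hρ hU hV hVc.isPreconnected ⟨z₁, hz₁, y, hy⟩ hz₂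
  have hunique : ∀ z₁ ∈ V, (∃! y, y ∈ U ∧ ρ y = z₁) → ∀ z₂ ∈ V, ∃! y, y ∈ U ∧ ρ y = z₂ :=
    fun _ hz₁ ↦ hproper.existsUnique_preimage hρ hmaps hU hV hVc.isPreconnected hz₁
  refine ⟨fun z₁ hz₁ z₂ hz₂ ↦ ⟨?_, (hunique z₁ hz₁ · z₂ hz₂), (hunique z₂ hz₂ · z₁ hz₁)⟩, ?_⟩
  · simp only [← not_nonempty_iff_eq_empty]
    exact not_congr ⟨hnonempty z₁ hz₁ z₂ hz₂, hnonempty z₂ hz₂ z₁ hz₁⟩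
  · rintro ⟨z₀, hz₀, h₀⟩
    have h := hunique z₀ hz₀ h₀
    exact ⟨hmaps, fun x₁ h₁ x₂ h₂ he ↦ (h _ (hmaps h₁)).unique ⟨h₁, rfl⟩ ⟨h₂, he.symm⟩,
      fun z hz ↦ (h z hz).exists⟩

/-- Degree rigidity for proper local diffeomorphisms: the counting function
`N(z) ∈ {0,1,2}` (empty / exactly one / at least two preimages) is constant on the
connected open set `V`; in particular if some value is attained exactly once, then
`ρ` is a bijection from `U` onto `V`. -/
theorem stmt_14 (n : ℕ)
    (U V : Set (EuclideanSpace ℝ (Fin n)))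
    (hU : IsOpen U) (hV : IsOpen V) (hUc : IsConnected U) (hVc : IsConnected V)
    (ρ : EuclideanSpace ℝ (Fin n) → EuclideanSpace ℝ (Fin n))
    (hmaps : Set.MapsTo ρ U V)
    (hC1 : ContDiffOn ℝ 1 ρ U)
    (hdiff : ∀ y ∈ U, ∃ L : EuclideanSpace ℝ (Fin n) ≃L[ℝ] EuclideanSpace ℝ (Fin n),
      HasFDerivAt ρ (L : EuclideanSpace ℝ (Fin n) →L[ℝ] EuclideanSpace ℝ (Fin n)) y)
    (hproper : ∀ K : Set (EuclideanSpace ℝ (Fin n)), K ⊆ V → IsCompact K →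
      IsCompact {y | y ∈ U ∧ ρ y ∈ K}) :
    (∀ z₁ ∈ V, ∀ z₂ ∈ V,
      (({y | y ∈ U ∧ ρ y = z₁} = ∅) ↔ ({y | y ∈ U ∧ ρ y = z₂} = ∅)) ∧
      ((∃! y, y ∈ U ∧ ρ y = z₁) ↔ (∃! y, y ∈ U ∧ ρ y = z₂))) ∧
    ((∃ z₀ ∈ V, ∃! y, y ∈ U ∧ ρ y = z₀) → Set.BijOn ρ U V) :=
  stmt_14_general n U V hU hV hVc ρ hmaps hC1 hdiff hproper
end
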